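/- Let Φ ∈ P(M,N) and Ψ ∈ P(M,M−N) be Naimark complements and let k ≤ min{N, M−N}. Then ||Ψ_{K^c}||_* = ||Φ_K||_* + (M−N−k) for every K ⊆ [M] with |K| = k, where ||·||_* is the nuclear norm. Consequently NE_{M−k}(Ψ) = NE_k(Φ) + (M−N−k)·C(M,k). -/

import Mathlib

open Matrix Finset


noncomputable def colSub {N M : ℕ} (Φ : Matrix (Fin N) (Fin M) ℂ) (K : Finset (Fin M)) :
    Matrix (Fin N) ↥K ℂ := Φ.submatrix id (fun k => (k : Fin M))

/-- The k-dimensional volume of the parallelotope spanned by the columns of Φ indexed by K. -/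
noncomputable def vol {N M : ℕ} (Φ : Matrix (Fin N) (Fin M) ℂ) (K : Finset (Fin M)) : ℝ :=
  Real.sqrt (((colSub Φ K)ᴴ * colSub Φ K).det.re)


/-- The nuclear norm: the sum of the singular values, i.e. of the square roots of the
eigenvalues of Aᴴ * A. -/
noncomputable def nuclearNorm {m n : Type*} [Fintype m] [Fintype n] [DecidableEq n]
    (A : Matrix m n ℂ) : ℝ :=
  ∑ i, Real.sqrt ((Matrix.isHermitian_conjTranspose_mul_self A).eigenvalues i)

/-!
Write `B = Φ_{Kᶜ}` and `C = Φ_K`. The Naimark relation restricted to `Kᶜ` gives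
`Ψ_{Kᶜ}ᴴ Ψ_{Kᶜ} = 1 - Bᴴ B`, and splitting `Φ Φᴴ = 1` along `K ⊔ Kᶜ` gives `B Bᴴ = 1 - C Cᴴ`.
Since `Bᴴ B` and `B Bᴴ` (and likewise `Cᴴ C` and `C Cᴴ`) have the same nonzero eigenvalues,
the eigenvalues of `Ψ_{Kᶜ}ᴴ Ψ_{Kᶜ}` are the squared singular values of `C`, together with the
eigenvalue `1` counted `|Kᶜ| - N = L - k` times. Eigenvalues are tracked with multiplicity as the
roots of characteristic polynomials. Summing over `K ↦ Kᶜ` gives the energy identity.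
-/

namespace Matrix

open Polynomial

variable {𝕜 : Type*} [Field 𝕜] {m n : Type*} [Fintype m] [DecidableEq m] [Fintype n]
  [DecidableEq n]

theorem charpoly_one_sub [Infinite 𝕜] (A : Matrix n n 𝕜) :
    (1 - A).charpoly = C ((-1) ^ Fintype.card n) * A.charpoly.comp (1 - X) := by
  refine Polynomial.funext fun t => ?_
  have : scalar n t - (1 - A) = -(scalar n (1 - t) - A) := by
    ext i j; by_cases h : i = j <;> simp [h]; ring
  rw [eval_mul, eval_comp, eval_charpoly, eval_charpoly, this, det_neg]
  simp

theorem roots_charpoly_one_sub [Infinite 𝕜] (A : Matrix n n 𝕜) :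
    (1 - A).charpoly.roots = A.charpoly.roots.map (1 - ·) := by
  have h := map_roots_comp_C_mul_X_add_C A.charpoly (-1) 1 isUnit_one.neg
  rw [charpoly_one_sub, roots_C_mul _ (pow_ne_zero _ (neg_ne_zero.mpr one_ne_zero)), ← h,
    Multiset.map_map]
  simp [sub_eq_neg_add]

theorem roots_charpoly_mul_comm (A : Matrix m n 𝕜) (B : Matrix n m 𝕜) :
    (A * B).charpoly.roots + Multiset.replicate (Fintype.card n) 0 =
      (B * A).charpoly.roots + Multiset.replicate (Fintype.card m) 0 := by
  have h := congrArg roots (charpoly_mul_comm' A B)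
  rw [roots_mul ((monic_X_pow _).mul (charpoly_monic _)).ne_zero,
    roots_mul ((monic_X_pow _).mul (charpoly_monic _)).ne_zero, roots_X_pow, roots_X_pow,
    Multiset.nsmul_singleton, Multiset.nsmul_singleton] at h
  rw [add_comm, h, add_comm]

end Matrix

theorem nuclearNorm_eq_sum_roots {m n : Type*} [Fintype m] [Fintype n] [DecidableEq n]
    (A : Matrix m n ℂ) :
    nuclearNorm A = ((Aᴴ * A).charpoly.roots.map fun z => √z.re).sum := by
  rw [nuclearNorm, (isHermitian_conjTranspose_mul_self A).roots_charpoly_eq_eigenvalues,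
    Multiset.map_map, Finset.sum_eq_multiset_sum]
  simp

theorem nuclearNorm_eq_sum_roots_mul_conjTranspose {m n : Type*} [Fintype m] [DecidableEq m]
    [Fintype n] [DecidableEq n] (A : Matrix m n ℂ) :
    nuclearNorm A = ((A * Aᴴ).charpoly.roots.map fun z => √z.re).sum := by
  have h := congrArg (fun s => (s.map fun z : ℂ => √z.re).sum) (roots_charpoly_mul_comm Aᴴ A)
  simpa [nuclearNorm_eq_sum_roots] using h

theorem conjTranspose_colSub_mul_colSub {N M : ℕ} (Φ : Matrix (Fin N) (Fin M) ℂ)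
    (K : Finset (Fin M)) :
    (colSub Φ K)ᴴ * colSub Φ K = (Φᴴ * Φ).submatrix (↑) (↑) := by
  rw [colSub, conjTranspose_submatrix, ← submatrix_mul _ _ _ _ _ Function.bijective_id]

theorem colSub_mul_conjTranspose_add_compl {N M : ℕ} (Φ : Matrix (Fin N) (Fin M) ℂ)
    (K : Finset (Fin M)) :
    colSub Φ K * (colSub Φ K)ᴴ + colSub Φ Kᶜ * (colSub Φ Kᶜ)ᴴ = Φ * Φᴴ := by
  ext i j
  simp only [colSub, Matrix.add_apply, mul_apply, submatrix_apply, conjTranspose_apply, id]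
  rw [Finset.sum_coe_sort K (fun m => Φ i m * star (Φ j m)),
    Finset.sum_coe_sort Kᶜ (fun m => Φ i m * star (Φ j m)), Finset.sum_add_sum_compl]

theorem roots_charpoly_colSub_compl {N L M : ℕ}
    {Φ : Matrix (Fin N) (Fin M) ℂ} {Ψ : Matrix (Fin L) (Fin M) ℂ}
    (hΦ : Φ * Φᴴ = 1) (hNaimark : Ψᴴ * Ψ = 1 - Φᴴ * Φ) (K : Finset (Fin M)) :
    ((colSub Ψ Kᶜ)ᴴ * colSub Ψ Kᶜ).charpoly.roots + Multiset.replicate N 1 =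
      (colSub Φ K * (colSub Φ K)ᴴ).charpoly.roots + Multiset.replicate Kᶜ.card 1 := by
  set A := colSub Ψ Kᶜ
  set B := colSub Φ Kᶜ
  set C := colSub Φ K
  have hA : Aᴴ * A = 1 - Bᴴ * B := by
    rw [conjTranspose_colSub_mul_colSub, conjTranspose_colSub_mul_colSub, hNaimark,
      submatrix_sub, Pi.sub_apply, Pi.sub_apply, submatrix_one _ Subtype.val_injective]
  have hB : B * Bᴴ = 1 - C * Cᴴ := by
    rw [← hΦ, ← colSub_mul_conjTranspose_add_compl Φ K, add_sub_cancel_left]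
  have hBB := roots_charpoly_mul_comm Bᴴ B
  rw [Fintype.card_fin, Fintype.card_coe] at hBB
  calc _ = (((Bᴴ * B).charpoly.roots + Multiset.replicate N 0)).map (1 - ·) := by
        rw [hA, roots_charpoly_one_sub, Multiset.map_add, Multiset.map_replicate, sub_zero]
    _ = ((B * Bᴴ).charpoly.roots + Multiset.replicate Kᶜ.card 0).map (1 - ·) := by rw [hBB]
    _ = _ := by
        rw [hB, roots_charpoly_one_sub, Multiset.map_add, Multiset.map_map,
          Multiset.map_replicate, sub_zero]
        simp

theorem nuclearNorm_colSub_compl_add {N L M : ℕ}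
    {Φ : Matrix (Fin N) (Fin M) ℂ} {Ψ : Matrix (Fin L) (Fin M) ℂ}
    (hΦ : Φ * Φᴴ = 1) (hNaimark : Ψᴴ * Ψ = 1 - Φᴴ * Φ) (K : Finset (Fin M)) :
    nuclearNorm (colSub Ψ Kᶜ) + N = nuclearNorm (colSub Φ K) + Kᶜ.card := by
  have h := congrArg (fun s => (s.map fun z : ℂ => √z.re).sum)
    (roots_charpoly_colSub_compl hΦ hNaimark K)
  rw [nuclearNorm_eq_sum_roots, nuclearNorm_eq_sum_roots_mul_conjTranspose (colSub Φ K)]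
  simpa using h

theorem Finset.sum_powersetCard_compl {α β : Type*} [Fintype α] [DecidableEq α]
    [AddCommMonoid β] {k : ℕ} (hk : k ≤ Fintype.card α) (f : Finset α → β) :
    ∑ K ∈ powersetCard (Fintype.card α - k) univ, f K = ∑ K ∈ powersetCard k univ, f Kᶜ := by
  refine Finset.sum_nbij' compl compl (fun K hK => ?_) (fun K hK => ?_)
    (fun K _ => compl_compl K) (fun K _ => compl_compl K) (fun K _ => by rw [compl_compl])
  · simp_all [mem_powersetCard, card_compl]
    omega
  · simp_all [mem_powersetCard, card_compl]

theorem naimark_nuclear_energy_general {N L M k : ℕ}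
    (Φ : Matrix (Fin N) (Fin M) ℂ) (Ψ : Matrix (Fin L) (Fin M) ℂ)
    (hL : N + L = M)
    (hΦ : Φ * Φᴴ = 1)
    (hNaimark : Ψᴴ * Ψ = 1 - Φᴴ * Φ) :
    (∀ K : Finset (Fin M), K.card = k →
        nuclearNorm (colSub Ψ Kᶜ) = nuclearNorm (colSub Φ K) + ((L : ℝ) - (k : ℝ))) ∧
      ∑ K ∈ Finset.powersetCard (M - k) (Finset.univ : Finset (Fin M)),
          nuclearNorm (colSub Ψ K) =
        (∑ K ∈ Finset.powersetCard k (Finset.univ : Finset (Fin M)),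
          nuclearNorm (colSub Φ K)) + ((L : ℝ) - (k : ℝ)) * (M.choose k : ℝ) := by
  have hcompl (K : Finset (Fin M)) (hK : K.card = k) :
      nuclearNorm (colSub Ψ Kᶜ) = nuclearNorm (colSub Φ K) + ((L : ℝ) - (k : ℝ)) := by
    have hcard : (Kᶜ.card : ℝ) + k = N + L := by
      rw [← hK]
      exact_mod_cast (card_compl_add_card K).trans ((Fintype.card_fin M).trans hL.symm)
    linarith [nuclearNorm_colSub_compl_add hΦ hNaimark K]
  refine ⟨hcompl, ?_⟩
  rcases le_or_gt k M with hkM | hMk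
  · have hsum := sum_powersetCard_compl (α := Fin M) (hkM.trans_eq (Fintype.card_fin M).symm)
      fun K => nuclearNorm (colSub Ψ K)
    rw [Fintype.card_fin] at hsum
    rw [hsum, sum_congr rfl fun K hK => hcompl K (mem_powersetCard.1 hK).2, sum_add_distrib,
      sum_const, card_powersetCard, card_univ, Fintype.card_fin, nsmul_eq_mul, mul_comm]
  · rw [Nat.sub_eq_zero_of_le hMk.le, (powersetCard_eq_empty (n := k)).2 (by simpa using hMk),
      Nat.choose_eq_zero_of_lt hMk]
    simp [nuclearNorm]

/-- For Naimark complements, nuclear norms of complementary subsets differ by M−N−k, and hence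
the (M−k)-nuclear energy of Ψ equals the k-nuclear energy of Φ plus (M−N−k)·C(M,k). -/
theorem naimark_nuclear_energy {N L M k : ℕ}
    (Φ : Matrix (Fin N) (Fin M) ℂ) (Ψ : Matrix (Fin L) (Fin M) ℂ)
    (hL : N + L = M) (hkN : k ≤ N) (hkL : k ≤ L)
    (hΦ : Φ * Φᴴ = 1) (hΨ : Ψ * Ψᴴ = 1)
    (hNaimark : Ψᴴ * Ψ = 1 - Φᴴ * Φ) :
    (∀ K : Finset (Fin M), K.card = k →
        nuclearNorm (colSub Ψ Kᶜ) = nuclearNorm (colSub Φ K) + ((L : ℝ) - (k : ℝ))) ∧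
      ∑ K ∈ Finset.powersetCard (M - k) (Finset.univ : Finset (Fin M)),
          nuclearNorm (colSub Ψ K) =
        (∑ K ∈ Finset.powersetCard k (Finset.univ : Finset (Fin M)),
          nuclearNorm (colSub Φ K)) + ((L : ℝ) - (k : ℝ)) * (M.choose k : ℝ) :=
  naimark_nuclear_energy_general Φ Ψ hL hΦ hNaimark
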